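/- arXiv:2602.05952 — 2 statements merged into one kernel-verified Lean document; each statement's English description precedes it below -/
import Mathlib

section
/- Assume c_0>0, c_j≥0 for j≥1, r_j>0. If k is even, the smallest positive root of U_{k+1} is strictly smaller than the smallest positive root of U_k (both polynomials having positive roots). -/
open Polynomial

noncomputable def U (c r : ℕ → ℝ) : ℕ → Polynomial ℝ
  | 0 => 1
  | 1 => X - C (c 0)
  | (k+2) => (X + C ((-1)^(k+2) * c (k+1))) * U c r (k+1) - C (r (k+1)) * U c r k

/-- sign sequence: sg n is the sign of U_n(0) -/
noncomputable def sg : ℕ → ℝ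
  | 0 => 1
  | n+1 => (-1)^(n+1) * sg n

lemma sg_succ (n : ℕ) : sg (n+1) = (-1)^(n+1) * sg n := rfl

lemma sg_add_two (n : ℕ) : sg (n+2) = - sg n := by
  show ((-1:ℝ))^(n+2) * ((-1)^(n+1) * sg n) = - sg n
  rw [← mul_assoc, ← pow_add]
  have h : Odd (n + 2 + (n+1)) := ⟨n+1, by ring⟩
  rw [h.neg_one_pow]; ring

lemma sg_eq (n : ℕ) : sg n = 1 ∨ sg n = -1 := by
  induction n with
  | zero => left; rfl
  | succ k ih =>
    rw [sg_succ]
    rcases Nat.even_or_odd (k+1) with h | h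
    · rw [h.neg_one_pow]; simpa using ih
    · rw [h.neg_one_pow]; rcases ih with h' | h' <;> rw [h'] <;> norm_num

lemma sg_ne_zero (n : ℕ) : sg n ≠ 0 := by
  rcases sg_eq n with h | h <;> rw [h] <;> norm_num

lemma sg_odd (m : ℕ) : sg (2*m+1) = - sg (2*m) := by
  rw [sg_succ]
  have h : Odd (2*m+1) := ⟨m, by ring⟩
  rw [h.neg_one_pow]; ring

/-- evaluation form of the recurrence -/
lemma U_eval (c r : ℕ → ℝ) (k : ℕ) (x : ℝ) :
    eval x (U c r (k+2)) =
      (x + (-1)^(k+2) * c (k+1)) * eval x (U c r (k+1)) - r (k+1) * eval x (U c r k) := by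
  simp [U]

lemma U_eval_of_even (c r : ℕ → ℝ) {k : ℕ} (hk : Even k) (x : ℝ) :
    eval x (U c r (k+2)) =
      (x + c (k+1)) * eval x (U c r (k+1)) - r (k+1) * eval x (U c r k) := by
  rw [U_eval]
  have h : Even (k+2) := hk.add (by decide)
  rw [h.neg_one_pow, one_mul]

lemma U_eval_of_odd (c r : ℕ → ℝ) {k : ℕ} (hk : Odd k) (x : ℝ) :
    eval x (U c r (k+2)) =
      (x - c (k+1)) * eval x (U c r (k+1)) - r (k+1) * eval x (U c r k) := by
  rw [U_eval]
  have h : Odd (k+2) := by rcases hk with ⟨t, ht⟩; exact ⟨t+1, by omega⟩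
  rw [h.neg_one_pow]; ring

section Main

variable {c r : ℕ → ℝ}

lemma U_zero_pos (hc0 : 0 < c 0) (hc : ∀ j, 1 ≤ j → 0 ≤ c j) (hr : ∀ k, 1 ≤ k → 0 < r k) :
    ∀ n, 0 < sg n * eval 0 (U c r n) := by
  intro n
  induction n using Nat.twoStepInduction with
  | zero => simp [U, sg]
  | one =>
    have h1 : sg 1 = -1 := by norm_num [sg]
    show 0 < sg 1 * eval 0 (X - C (c 0))
    rw [h1]
    simp
    linarith
  | more k ih1 ih2 =>
    rw [U_eval]
    have hA : sg (k+2) * (-1:ℝ)^(k+2) = sg (k+1) := by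
      rw [sg_succ (k+1)]
      have h5 : ((-1:ℝ))^(k+2) * (-1)^(k+2) = 1 := by
        rw [← pow_add]
        exact Even.neg_one_pow ⟨k+2, by ring⟩
      linear_combination sg (k+1) * h5
    have hN : sg (k+2) = - sg k := sg_add_two k
    have key : sg (k+2) * ((0 + (-1)^(k+2) * c (k+1)) * eval 0 (U c r (k+1))
        - r (k+1) * eval 0 (U c r k))
        = c (k+1) * (sg (k+1) * eval 0 (U c r (k+1))) + r (k+1) * (sg k * eval 0 (U c r k)) := by
      linear_combination (c (k+1) * eval 0 (U c r (k+1))) * hA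
        - (r (k+1) * eval 0 (U c r k)) * hN
    rw [key]
    exact add_pos_of_nonneg_of_pos
      (mul_nonneg (hc (k+1) (by omega)) ih2.le)
      (mul_pos (hr (k+1) (by omega)) ih1)

lemma U_ne_zero (hc0 : 0 < c 0) (hc : ∀ j, 1 ≤ j → 0 ≤ c j) (hr : ∀ k, 1 ≤ k → 0 < r k)
    (n : ℕ) : U c r n ≠ 0 := by
  intro h
  have h2 := U_zero_pos hc0 hc hr n
  rw [h] at h2; simp at h2

/-- the set of positive roots -/
def SS (c r : ℕ → ℝ) (n : ℕ) : Set ℝ := {x : ℝ | eval x (U c r n) = 0 ∧ 0 < x}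

lemma SS_exists_least (hc0 : 0 < c 0) (hc : ∀ j, 1 ≤ j → 0 ≤ c j) (hr : ∀ k, 1 ≤ k → 0 < r k)
    {n : ℕ} (hne : (SS c r n).Nonempty) : ∃ a, IsLeast (SS c r n) a := by
  have hfin : (SS c r n).Finite :=
    (Polynomial.finite_setOf_isRoot (U_ne_zero hc0 hc hr n)).subset (fun x hx => hx.1)
  obtain ⟨a, ha, hm⟩ := Set.exists_min_image _ id hfin hne
  exact ⟨a, ha, hm⟩

lemma pos_of_no_zero {f : ℝ → ℝ} (hf : Continuous f) {t x : ℝ} (h0 : 0 < f 0)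
    (hnz : ∀ y, 0 < y → y < t → f y ≠ 0) (hx : 0 ≤ x) (hxt : x < t) : 0 < f x := by
  rcases eq_or_lt_of_le hx with h | h
  · rwa [← h]
  by_contra hle
  push_neg at hle
  rcases lt_or_eq_of_le hle with hlt | heq
  · obtain ⟨y, hy, hy0⟩ := intermediate_value_Ioo' (le_of_lt h) hf.continuousOn
      (Set.mem_Ioo.mpr ⟨hlt, h0⟩)
    exact hnz y hy.1 (hy.2.trans hxt) hy0
  · exact hnz x h hxt heq

lemma exists_zero {f : ℝ → ℝ} (hf : Continuous f) {p q : ℝ} (hpq : p ≤ q)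
    (hp : 0 < f p) (hq : f q < 0) : ∃ z, p < z ∧ z < q ∧ f z = 0 := by
  obtain ⟨z, hz, hz0⟩ := intermediate_value_Ioo' hpq hf.continuousOn (Set.mem_Ioo.mpr ⟨hq, hp⟩)
  exact ⟨z, hz.1, hz.2, hz0⟩

/-- invariant -/
def Good (c r : ℕ → ℝ) (m : ℕ) (γ β : ℝ) : Prop :=
  IsLeast (SS c r (2*m+1)) γ ∧
  (∀ x, 0 ≤ x → x < γ → 0 < sg (2*m+1) * eval x (U c r (2*m+1))) ∧
  γ < β ∧
  (∀ x, 0 < x → x < β → 0 < sg (2*m) * eval x (U c r (2*m))) ∧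
  sg (2*m+2) * eval β (U c r (2*m+2)) < 0

lemma good_base (hc0 : 0 < c 0) (hc : ∀ j, 1 ≤ j → 0 ≤ c j) (hr : ∀ k, 1 ≤ k → 0 < r k) :
    ∃ γ β, Good c r 0 γ β := by
  have hr1 := hr 1 le_rfl
  have hc1 := hc 1 le_rfl
  have hsg1 : sg 1 = -1 := by norm_num [sg]
  have hsg2 : sg 2 = -1 := by rw [sg_add_two 0]; rfl
  have hU1 : ∀ x : ℝ, eval x (U c r 1) = x - c 0 := by intro x; simp [U]
  refine ⟨c 0, c 0 + r 1 + 1, ?_, ?_, by linarith, ?_, ?_⟩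
  · constructor
    · exact ⟨by rw [hU1]; ring, hc0⟩
    · intro x hx
      have := hx.1; rw [hU1] at this; linarith [this]
  · intro x hx0 hxγ
    rw [hsg1, hU1]; nlinarith
  · intro x hx0 hxβ
    show 0 < sg 0 * eval x (U c r 0)
    have : eval x (U c r 0) = 1 := by simp [U]
    rw [this]; show (0:ℝ) < sg 0 * 1; norm_num [sg]
  · have hE : eval (c 0 + r 1 + 1) (U c r 2) =
        (c 0 + r 1 + 1 + c 1) * eval (c 0 + r 1 + 1) (U c r 1)
          - r 1 * eval (c 0 + r 1 + 1) (U c r 0) := U_eval_of_even c r (by decide) _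
    have h0 : eval (c 0 + r 1 + 1) (U c r 0) = 1 := by simp [U]
    rw [hsg2, hE, h0, hU1]
    nlinarith

lemma good_step (hc0 : 0 < c 0) (hc : ∀ j, 1 ≤ j → 0 ≤ c j) (hr : ∀ k, 1 ≤ k → 0 < r k)
    (m : ℕ) (γ β : ℝ) (h : Good c r m γ β) :
    ∃ γ' β', IsLeast (SS c r (2*m+2)) β' ∧ IsLeast (SS c r (2*m+3)) γ' ∧ γ' < β' ∧
      Good c r (m+1) γ' β' := by
  obtain ⟨hγle, hγsign, hγβ, hβsign, hβ2⟩ := h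
  have γpos : 0 < γ := hγle.1.2
  have γroot : eval γ (U c r (2*m+1)) = 0 := hγle.1.1
  have hEv : Even (2*m) := ⟨m, by ring⟩
  have hOd : Odd (2*m+1) := ⟨m, by ring⟩
  have hEv2 : Even (2*m+2) := ⟨m+1, by ring⟩
  have h1 : sg (2*m+1) = - sg (2*m) := sg_odd m
  have h2 : sg (2*m+2) = - sg (2*m) := sg_add_two (2*m)
  have h3 : sg (2*m+3) = sg (2*m) := by rw [sg_add_two (2*m+1), h1]; ring
  have h4 : sg (2*m+4) = sg (2*m) := by
    rw [show (2*m+4) = (2*m+2)+2 from rfl, sg_add_two (2*m+2), h2]; ring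
  have hrm1 := hr (2*m+1) (by omega)
  have hrm2 := hr (2*m+2) (by omega)
  have hcm1 := hc (2*m+1) (by omega)
  -- sign of U_{2m+2} on (0, γ]
  have haveA : ∀ x, 0 < x → x ≤ γ → 0 < (- sg (2*m)) * eval x (U c r (2*m+2)) := by
    intro x hx hxγ
    have hE := U_eval_of_even c r hEv x
    have A1 : 0 ≤ (- sg (2*m)) * eval x (U c r (2*m+1)) := by
      rcases lt_or_eq_of_le hxγ with hlt | heq
      · have := hγsign x hx.le hlt; rw [h1] at this; linarith
      · rw [heq, γroot]; simp
    have A2 : 0 < sg (2*m) * eval x (U c r (2*m)) := hβsign x hx (lt_of_le_of_lt hxγ hγβ)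
    have hxc : 0 ≤ x + c (2*m+1) := by linarith
    rw [hE]
    nlinarith [mul_nonneg hxc A1, mul_pos hrm1 A2]
  have hfcont : Continuous fun x => (- sg (2*m)) * eval x (U c r (2*m+2)) :=
    continuous_const.mul (U c r (2*m+2)).continuous
  have hfγ : 0 < (- sg (2*m)) * eval γ (U c r (2*m+2)) := haveA γ γpos le_rfl
  have hfβ : (- sg (2*m)) * eval β (U c r (2*m+2)) < 0 := by rw [h2] at hβ2; linarith [hβ2]
  obtain ⟨z, hγz, hzβ, hz0⟩ := exists_zero hfcont (le_of_lt hγβ) hfγ hfβ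
  have hz0' : eval z (U c r (2*m+2)) = 0 := by
    rcases mul_eq_zero.mp hz0 with h' | h'
    · exact absurd h' (by simpa using sg_ne_zero (2*m))
    · exact h'
  have hSne : (SS c r (2*m+2)).Nonempty := ⟨z, hz0', γpos.trans hγz⟩
  obtain ⟨β', hβ'least⟩ := SS_exists_least hc0 hc hr hSne
  have hβ'pos : 0 < β' := hβ'least.1.2
  have hβ'root : eval β' (U c r (2*m+2)) = 0 := hβ'least.1.1
  have hγβ' : γ < β' := by
    by_contra hle
    push_neg at hle
    have := haveA β' hβ'pos hle
    rw [hβ'root] at this; simp at this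
  have hβ'β : β' < β := lt_of_le_of_lt (hβ'least.2 ⟨hz0', γpos.trans hγz⟩) hzβ
  -- sign of U_{2m+2} on [0, β')
  have hsign2 : ∀ x, 0 ≤ x → x < β' → 0 < (- sg (2*m)) * eval x (U c r (2*m+2)) := by
    intro x hx hxβ'
    apply pos_of_no_zero hfcont ?_ ?_ hx hxβ'
    · have := U_zero_pos hc0 hc hr (2*m+2); rw [h2] at this; exact this
    · intro y hy hyβ' hy0
      have hy0' : eval y (U c r (2*m+2)) = 0 := by
        rcases mul_eq_zero.mp hy0 with h' | h'
        · exact absurd h' (by simpa using sg_ne_zero (2*m))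
        · exact h'
      exact absurd (hβ'least.2 ⟨hy0', hy⟩) (not_le.mpr hyβ')
  -- sign of U_{2m+1} at β'
  have hU0β' : 0 < sg (2*m) * eval β' (U c r (2*m)) := hβsign β' hβ'pos hβ'β
  have hU1β' : 0 < sg (2*m) * eval β' (U c r (2*m+1)) := by
    have hrec := U_eval_of_even c r hEv β'
    rw [hβ'root] at hrec
    have hxc : 0 < β' + c (2*m+1) := by linarith
    have key : (β' + c (2*m+1)) * (sg (2*m) * eval β' (U c r (2*m+1)))
        = r (2*m+1) * (sg (2*m) * eval β' (U c r (2*m))) := by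
      linear_combination (-(sg (2*m))) * hrec
    nlinarith [mul_pos hrm1 hU0β']
  -- U_{2m+3} at β'
  have hE3 : eval β' (U c r (2*m+3)) = - (r (2*m+2) * eval β' (U c r (2*m+1))) := by
    have := U_eval_of_odd c r hOd β'
    rw [hβ'root] at this
    rw [show (2*m+1)+2 = 2*m+3 from rfl] at this
    rw [this]; ring
  have hβ'3 : sg (2*m) * eval β' (U c r (2*m+3)) < 0 := by
    rw [hE3]
    nlinarith [mul_pos hrm2 hU1β']
  -- root of U_{2m+3} below β'
  have hgcont : Continuous fun x => sg (2*m) * eval x (U c r (2*m+3)) :=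
    continuous_const.mul (U c r (2*m+3)).continuous
  have hg0 : 0 < sg (2*m) * eval 0 (U c r (2*m+3)) := by
    have := U_zero_pos hc0 hc hr (2*m+3); rw [h3] at this; exact this
  obtain ⟨w, hw0, hwβ', hw⟩ := exists_zero hgcont hβ'pos.le hg0 hβ'3
  have hw' : eval w (U c r (2*m+3)) = 0 := by
    rcases mul_eq_zero.mp hw with h' | h'
    · exact absurd h' (sg_ne_zero (2*m))
    · exact h'
  have hS3ne : (SS c r (2*m+3)).Nonempty := ⟨w, hw', hw0⟩
  obtain ⟨γ', hγ'least⟩ := SS_exists_least hc0 hc hr hS3ne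
  have hγ'pos : 0 < γ' := hγ'least.1.2
  have hγ'β' : γ' < β' := lt_of_le_of_lt (hγ'least.2 ⟨hw', hw0⟩) hwβ'
  -- sign of U_{2m+3} on [0, γ')
  have hsign3 : ∀ x, 0 ≤ x → x < γ' → 0 < sg (2*m) * eval x (U c r (2*m+3)) := by
    intro x hx hxγ'
    apply pos_of_no_zero hgcont hg0 ?_ hx hxγ'
    intro y hy hyγ' hy0
    have hy0' : eval y (U c r (2*m+3)) = 0 := by
      rcases mul_eq_zero.mp hy0 with h' | h'
      · exact absurd h' (sg_ne_zero (2*m))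
      · exact h'
    exact absurd (hγ'least.2 ⟨hy0', hy⟩) (not_le.mpr hyγ')
  -- U_{2m+4} at β'
  have hβ'4 : sg (2*m+4) * eval β' (U c r (2*m+4)) < 0 := by
    have hE4 := U_eval_of_even c r hEv2 β'
    rw [show (2*m+2)+2 = 2*m+4 from rfl, show (2*m+2)+1 = 2*m+3 from rfl, hβ'root] at hE4
    rw [h4, hE4]
    have hxc : 0 < β' + c (2*m+3) := by have := hc (2*m+3) (by omega); linarith
    nlinarith [mul_neg_of_pos_of_neg hxc hβ'3]
  refine ⟨γ', β', hβ'least, hγ'least, hγ'β', ?_, ?_, hγ'β', ?_, ?_⟩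
  · exact hγ'least
  · intro x hx hxγ'
    have := hsign3 x hx hxγ'
    rw [show 2*(m+1)+1 = 2*m+3 from by ring, h3]
    exact this
  · intro x hx hxβ'
    have := hsign2 x hx.le hxβ'
    rw [show 2*(m+1) = 2*m+2 from by ring, h2]
    exact this
  · rw [show 2*(m+1)+2 = 2*m+4 from by ring]
    exact hβ'4

lemma good_exists (hc0 : 0 < c 0) (hc : ∀ j, 1 ≤ j → 0 ≤ c j) (hr : ∀ k, 1 ≤ k → 0 < r k) :
    ∀ m, ∃ γ β, Good c r m γ β := by
  intro m
  induction m with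
  | zero => exact good_base hc0 hc hr
  | succ n ih =>
    obtain ⟨γ, β, h⟩ := ih
    obtain ⟨γ', β', _, _, _, h'⟩ := good_step hc0 hc hr n γ β h
    exact ⟨γ', β', h'⟩

end Main

theorem stmt11 (c r : ℕ → ℝ) (hc0 : 0 < c 0) (hc : ∀ j, 1 ≤ j → 0 ≤ c j)
    (hr : ∀ k, 1 ≤ k → 0 < r k) (k : ℕ) (hk : Even k)
    (a b : ℝ)
    (ha : IsLeast {x : ℝ | (U c r k).eval x = 0 ∧ 0 < x} a)
    (hb : IsLeast {x : ℝ | (U c r (k+1)).eval x = 0 ∧ 0 < x} b) :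
    b < a := by
  rcases hk with ⟨t, rfl⟩
  cases t with
  | zero =>
    exfalso
    have h1 : eval a (U c r 0) = 0 := ha.1.1
    simp [U] at h1
  | succ n =>
    have hk1 : n+1+(n+1) = 2*n+2 := by ring
    have hk2 : n+1+(n+1)+1 = 2*n+3 := by ring
    rw [hk1] at ha
    rw [hk2] at hb
    obtain ⟨γ, β, h⟩ := good_exists hc0 hc hr n
    obtain ⟨γ', β', hβ', hγ', hlt, _⟩ := good_step hc0 hc hr n γ β h
    have hab : a = β' := ha.unique hβ'
    have hbb : b = γ' := hb.unique hγ'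
    rw [hab, hbb]
    exact hlt
end

section
/- For 1 ≤ m ≤ k and ξ a root of U_{k+1}, the partial derivative of U_{k+1} with respect to the parameter r_m, evaluated at ξ, equals −U_m(ξ)·U_{m−1}(ξ)/U_k(ξ) · ∏_{i=m+1}^{k} r_i. -/
/-!
Write `u n = U_n(ξ)` and `d n = ∂U_n/∂r_m (ξ)`. Differentiating the recurrence shows that for
`n ≥ m` both sequences satisfy the same three-term recurrence, with `d m = 0` and
`d (m + 1) = -u (m - 1)`. Their Casoratian `d (n + 1) * u n - d n * u (n + 1)` is therefore
multiplied by `r (n + 1)` at every step, so at `n = k` it equals `-u m * u (m - 1) * ∏ r i`.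
Since `u (k + 1) = 0` it is just `d (k + 1) * u k`, and `u k ≠ 0` because two consecutive `U`'s
have no common zero once the `r i` are nonzero.
-/

open Polynomial

theorem casoratian_eq_mul_prod {R : Type*} [CommRing R] {a b x y : ℕ → R} {m : ℕ}
    (hx : ∀ n ≥ m, x (n + 2) = a (n + 1) * x (n + 1) - b (n + 1) * x n)
    (hy : ∀ n ≥ m, y (n + 2) = a (n + 1) * y (n + 1) - b (n + 1) * y n)
    {n : ℕ} (hn : m ≤ n) :
    x (n + 1) * y n - x n * y (n + 1) =
      (x (m + 1) * y m - x m * y (m + 1)) * ∏ i ∈ Finset.Icc (m + 1) n, b i := by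
  induction n, hn using Nat.le_induction with
  | base => simp
  | succ n hn ih =>
    rw [Finset.prod_Icc_succ_top (by omega), ← mul_assoc, ← ih, hx n hn, hy n hn]
    ring

section

variable (c : ℕ → ℝ)

theorem U_congr {r r' : ℕ → ℝ} : ∀ {n : ℕ}, (∀ j < n, r' j = r j) → U c r' n = U c r n
  | 0, _ => rfl
  | 1, _ => rfl
  | n + 2, h => by
    rw [U, U, U_congr fun j hj => h j (by omega), U_congr fun j hj => h j (by omega),
      h (n + 1) (by omega)]

theorem eval_U_add_two (r : ℕ → ℝ) (n : ℕ) (ξ : ℝ) :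
    (U c r (n + 2)).eval ξ =
      (ξ + (-1) ^ (n + 2) * c (n + 1)) * (U c r (n + 1)).eval ξ
        - r (n + 1) * (U c r n).eval ξ := by
  simp [U]

theorem eval_U_ne_zero_of_eval_U_succ_eq_zero {r : ℕ → ℝ} (hr : ∀ k, 1 ≤ k → r k ≠ 0)
    {ξ : ℝ} :
    ∀ {n : ℕ}, (U c r (n + 1)).eval ξ = 0 → (U c r n).eval ξ ≠ 0
  | 0, _, h => by simp [U] at h
  | n + 1, hsucc, hn => by
    have h := eval_U_add_two c r n ξ
    rw [hsucc, hn, mul_zero, zero_sub, zero_eq_neg, mul_eq_zero] at h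
    exact eval_U_ne_zero_of_eval_U_succ_eq_zero hr hn (h.resolve_left (hr _ (by omega)))

variable (r : ℕ → ℝ) (m : ℕ) (ξ : ℝ)

theorem differentiable_eval_U_update :
    ∀ n, Differentiable ℝ fun t : ℝ => (U c (Function.update r m t) n).eval ξ
  | 0 => by simp [U]
  | 1 => by simp [U]
  | n + 2 => by
    have hupd : Differentiable ℝ fun t : ℝ => Function.update r m t (n + 1) := by
      simp only [Function.update_apply]
      split_ifs <;> fun_prop
    simp only [eval_U_add_two]
    exact ((differentiable_eval_U_update (n + 1)).const_mul _).sub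
      (hupd.mul (differentiable_eval_U_update n))

theorem deriv_eval_U_update_of_le {n : ℕ} (hn : n ≤ m) (x : ℝ) :
    deriv (fun t : ℝ => (U c (Function.update r m t) n).eval ξ) x = 0 := by
  have hconst :
      (fun t : ℝ => (U c (Function.update r m t) n).eval ξ) = fun _ => (U c r n).eval ξ :=
    funext fun t => by rw [U_congr c fun j hj => Function.update_of_ne (by omega) _ _]
  rw [hconst, deriv_const]

theorem deriv_eval_U_update_succ_succ (x : ℝ) :
    deriv (fun t : ℝ => (U c (Function.update r (m + 1) t) (m + 2)).eval ξ) x =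
      -(U c r m).eval ξ := by
  have haffine : (fun t : ℝ => (U c (Function.update r (m + 1) t) (m + 2)).eval ξ) =
      fun t => (ξ + (-1) ^ (m + 2) * c (m + 1)) * (U c r (m + 1)).eval ξ
        - t * (U c r m).eval ξ := by
    funext t
    rw [eval_U_add_two, Function.update_self,
      U_congr c fun j hj => Function.update_of_ne (by omega) _ _,
      U_congr c (n := m) fun j hj => Function.update_of_ne (by omega) _ _]
  rw [haffine]
  simp

theorem deriv_eval_U_update_add_two {n : ℕ} (hn : n + 1 ≠ m) (x : ℝ) :
    deriv (fun t : ℝ => (U c (Function.update r m t) (n + 2)).eval ξ) x =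
      (ξ + (-1) ^ (n + 2) * c (n + 1)) *
          deriv (fun t : ℝ => (U c (Function.update r m t) (n + 1)).eval ξ) x -
        r (n + 1) * deriv (fun t : ℝ => (U c (Function.update r m t) n).eval ξ) x := by
  have hsucc := (differentiable_eval_U_update c r m ξ (n + 1) x).hasDerivAt
  have hself := (differentiable_eval_U_update c r m ξ n x).hasDerivAt
  simp only [eval_U_add_two, Function.update_of_ne hn]
  exact ((hsucc.const_mul _).sub (hself.const_mul _)).deriv

end

/-- Partial derivative of `U_{k+1}(ξ)` with respect to the parameter `r_m`. -/
theorem stmt15 (c r : ℕ → ℝ) (hr : ∀ k, 1 ≤ k → 0 < r k) (k m : ℕ)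
    (hm1 : 1 ≤ m) (hm : m ≤ k)
    (ξ : ℝ) (hξ : (U c r (k+1)).eval ξ = 0) :
    deriv (fun t : ℝ => (U c (Function.update r m t) (k+1)).eval ξ) (r m) =
      -((U c r m).eval ξ * (U c r (m-1)).eval ξ) / (U c r k).eval ξ *
        ∏ i ∈ Finset.Icc (m+1) k, r i := by
  obtain ⟨j, rfl⟩ := Nat.exists_eq_add_of_le' hm1
  have hcas := casoratian_eq_mul_prod (a := fun i => ξ + (-1) ^ (i + 1) * c i)
    (x := fun n => deriv (fun t : ℝ => (U c (Function.update r (j + 1) t) n).eval ξ) (r (j + 1)))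
    (y := fun n => (U c r n).eval ξ)
    (fun n hn => deriv_eval_U_update_add_two c r (j + 1) ξ (by omega) _)
    (fun n _ => eval_U_add_two c r n ξ) hm
  beta_reduce at hcas
  rw [hξ, deriv_eval_U_update_succ_succ, deriv_eval_U_update_of_le c r _ ξ le_rfl] at hcas
  have huk := eval_U_ne_zero_of_eval_U_succ_eq_zero c (fun i hi => (hr i hi).ne') hξ
  rw [Nat.add_sub_cancel, div_mul_eq_mul_div, eq_div_iff huk]
  linear_combination hcas
end
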